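/- arXiv:2509.03274 — 9 statements merged into one kernel-verified Lean document; each statement's English description precedes it below -/
import Mathlib

section
/- Let 0 < α < β and 0 < c < α be fixed real constants. Define f(a,b) = (a² + b² - c²)/(2ab) for a, b ∈ [α, β]. Then the maximum of f on [α,β]² equals max{(α² + β² - c²)/(2αβ), 1 - c²/(2β²)}. -/
theorem stmt_1 (α β c : ℝ) (hα : 0 < α) (hαβ : α < β) (hc0 : 0 < c) (hcα : c < α) :
    IsGreatest
      ((fun p : ℝ × ℝ => (p.1 ^ 2 + p.2 ^ 2 - c ^ 2) / (2 * p.1 * p.2)) ''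
        (Set.Icc α β ×ˢ Set.Icc α β))
      (max ((α ^ 2 + β ^ 2 - c ^ 2) / (2 * α * β)) (1 - c ^ 2 / (2 * β ^ 2))) := by
  have hβ : 0 < β := hα.trans hαβ
  have hBB : (β ^ 2 + β ^ 2 - c ^ 2) / (2 * β * β) = 1 - c ^ 2 / (2 * β ^ 2) := by
    field_simp; ring
  have comm : ∀ x y : ℝ, (x ^ 2 + y ^ 2 - c ^ 2) / (2 * x * y)
      = (y ^ 2 + x ^ 2 - c ^ 2) / (2 * y * x) := by intro x y; ring_nf
  have key : ∀ a b : ℝ, α ≤ a → a ≤ β → 0 < b →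
      (a ^ 2 + b ^ 2 - c ^ 2) / (2 * a * b) ≤
        max ((α ^ 2 + b ^ 2 - c ^ 2) / (2 * α * b)) ((β ^ 2 + b ^ 2 - c ^ 2) / (2 * β * b)) := by
    intro a b ha1 ha2 hb
    have ha : 0 < a := hα.trans_le ha1
    rcases le_or_gt (b ^ 2 - c ^ 2) (a * β) with h | h
    · refine le_max_of_le_right ?_
      rw [div_le_div_iff₀ (by positivity) (by positivity)]
      nlinarith [mul_nonneg (sub_nonneg.2 ha2) (sub_nonneg.2 h), hb.le]
    · refine le_max_of_le_left ?_
      rw [div_le_div_iff₀ (by positivity) (by positivity)]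
      have h2 : a * α ≤ b ^ 2 - c ^ 2 := le_of_lt (lt_of_le_of_lt (by nlinarith) h)
      nlinarith [mul_nonneg (sub_nonneg.2 ha1) (sub_nonneg.2 h2), hb.le]
  have hAA : (α ^ 2 + α ^ 2 - c ^ 2) / (2 * α * α) ≤ 1 - c ^ 2 / (2 * β ^ 2) := by
    rw [← hBB, div_le_div_iff₀ (by positivity) (by positivity)]
    have h1 : α ^ 2 ≤ β ^ 2 := by nlinarith
    nlinarith [mul_le_mul_of_nonneg_left h1 (sq_nonneg c)]
  constructor
  · rcases le_total (1 - c ^ 2 / (2 * β ^ 2)) ((α ^ 2 + β ^ 2 - c ^ 2) / (2 * α * β)) with h | h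
    · rw [max_eq_left h]
      exact ⟨(α, β), ⟨Set.mem_Icc.2 ⟨le_refl _, hαβ.le⟩, Set.mem_Icc.2 ⟨hαβ.le, le_refl _⟩⟩, rfl⟩
    · rw [max_eq_right h]
      exact ⟨(β, β), ⟨Set.mem_Icc.2 ⟨hαβ.le, le_refl _⟩, Set.mem_Icc.2 ⟨hαβ.le, le_refl _⟩⟩, hBB⟩
  · rintro x ⟨⟨a, b⟩, ⟨⟨ha1, ha2⟩, ⟨hb1, hb2⟩⟩, rfl⟩
    simp only
    have hb : 0 < b := hα.trans_le hb1
    have step1 := key a b ha1 ha2 hb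
    have stepα : (α ^ 2 + b ^ 2 - c ^ 2) / (2 * α * b) ≤
        max ((α ^ 2 + β ^ 2 - c ^ 2) / (2 * α * β)) (1 - c ^ 2 / (2 * β ^ 2)) := by
      rw [comm α b]
      refine (key b α hb1 hb2 hα).trans (max_le ?_ ?_)
      · exact hAA.trans (le_max_right _ _)
      · rw [comm β α]; exact le_max_left _ _
    have stepβ : (β ^ 2 + b ^ 2 - c ^ 2) / (2 * β * b) ≤
        max ((α ^ 2 + β ^ 2 - c ^ 2) / (2 * α * β)) (1 - c ^ 2 / (2 * β ^ 2)) := by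
      rw [comm β b]
      refine (key b β hb1 hb2 hβ).trans (max_le ?_ ?_)
      · rw [comm α β]; exact le_max_left _ _
      · rw [hBB]; exact le_max_right _ _
    exact step1.trans (max_le stepα stepβ)
end

section
/- For x ≥ 1 and real constants a, b with |a| ≤ 0.01 and |b| ≤ 0.01, the polynomial identity (x+a)(x+1) + 2b - 2√(x³+ax+b)·√(1+a+b) is at least 0.19·(1-x)² for all x > 1; equivalently the function f(x) = [(x+a)(x+1)+2b-2√(x³+ax+b)√(1+a+b)]/(1-x)² satisfies f(x) ≥ 0.19 for all x > 1. -/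
set_option maxHeartbeats 1000000 in
theorem stmt_2 (a b : ℝ) (ha : |a| ≤ 0.01) (hb : |b| ≤ 0.01) :
    ∀ x : ℝ, 1 < x →
      0.19 ≤ ((x + a) * (x + 1) + 2 * b -
        2 * Real.sqrt (x ^ 3 + a * x + b) * Real.sqrt (1 + a + b)) / (1 - x) ^ 2 := by
  obtain ⟨ha1, ha2⟩ := abs_le.mp ha
  obtain ⟨hb1, hb2⟩ := abs_le.mp hb
  intro x hx
  have hx0 : (0:ℝ) ≤ x := by linarith
  have h2 : (0:ℝ) < (1 - x) ^ 2 := by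
    rw [sq]; exact mul_pos_of_neg_of_neg (by linarith) (by linarith)
  have hP : (0:ℝ) ≤ x ^ 3 + a * x + b := by
    nlinarith [mul_nonneg (show (0:ℝ) ≤ a + 0.01 by linarith) hx0, sq_nonneg x,
      mul_pos (mul_pos (lt_trans one_pos hx) (lt_trans one_pos hx)) (lt_trans one_pos hx)]
  have hQ : (0:ℝ) ≤ 1 + a + b := by linarith
  have hM : 0 ≤ 0.81 * x ^ 2 + 1.38 * x - 0.19 + a * x + a + 2 * b := by
    nlinarith [mul_nonneg (show (0:ℝ) ≤ a + 0.01 by linarith) hx0, sq_nonneg x]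
  have hH : 0 ≤ 0.6561 * x ^ 2 - 0.4522 * x + 0.0361
      - a * (2.38 * x + 0.38) - b * (4 * x + 4.76) + a ^ 2 := by
    nlinarith [mul_nonneg (show (0:ℝ) ≤ 0.01 - a by linarith)
        (show (0:ℝ) ≤ 2.38 * x + 0.38 by linarith),
      mul_nonneg (show (0:ℝ) ≤ 0.01 - b by linarith)
        (show (0:ℝ) ≤ 4 * x + 4.76 by linarith),
      sq_nonneg a, sq_nonneg (x - 1)]
  have key : (x ^ 3 + a * x + b) * (1 + a + b)
      ≤ ((0.81 * x ^ 2 + 1.38 * x - 0.19 + a * x + a + 2 * b) / 2) ^ 2 := by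
    nlinarith [mul_nonneg (sq_nonneg (x - 1)) hH]
  have hsqrt : 2 * Real.sqrt (x ^ 3 + a * x + b) * Real.sqrt (1 + a + b)
      ≤ 0.81 * x ^ 2 + 1.38 * x - 0.19 + a * x + a + 2 * b := by
    have h1 : Real.sqrt (x ^ 3 + a * x + b) * Real.sqrt (1 + a + b)
        = Real.sqrt ((x ^ 3 + a * x + b) * (1 + a + b)) := (Real.sqrt_mul hP _).symm
    have h3 : Real.sqrt ((x ^ 3 + a * x + b) * (1 + a + b))
        ≤ (0.81 * x ^ 2 + 1.38 * x - 0.19 + a * x + a + 2 * b) / 2 := by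
      have h4 := Real.sqrt_le_sqrt key
      rwa [Real.sqrt_sq (by positivity)] at h4
    rw [mul_assoc, h1]; linarith
  rw [le_div_iff₀ h2]
  have hr : (x + a) * (x + 1) + 2 * b
      - (0.81 * x ^ 2 + 1.38 * x - 0.19 + a * x + a + 2 * b) = 0.19 * (1 - x) ^ 2 := by ring
  linarith
end

section
/- For x > 1 and real constants a, b with |a| ≤ 0.01 and |b| ≤ 0.01, the function f(x) = [(x+a)(x+1)+2b-2√(x³+ax+b)√(1+a+b)]/(1-x)² satisfies f(x) ≤ 2. -/
theorem stmt_3 (a b : ℝ) (ha : |a| ≤ 0.01) (hb : |b| ≤ 0.01) :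
    ∀ x : ℝ, 1 < x →
      ((x + a) * (x + 1) + 2 * b -
        2 * Real.sqrt (x ^ 3 + a * x + b) * Real.sqrt (1 + a + b)) / (1 - x) ^ 2 ≤ 2 := by
  obtain ⟨ha1, ha2⟩ := abs_le.mp ha
  obtain ⟨hb1, hb2⟩ := abs_le.mp hb
  intro x hx
  have hP : (0:ℝ) < x ^ 3 + a * x + b := by nlinarith [sq_nonneg x, sq_nonneg (x-1)]
  have hQ : (0:ℝ) ≤ 1 + a + b := by linarith
  have hden : (0:ℝ) < (1 - x) ^ 2 := by nlinarith [mul_pos (sub_pos.mpr hx) (sub_pos.mpr hx)]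
  rw [div_le_iff₀ hden]
  have hsq : Real.sqrt (x ^ 3 + a * x + b) * Real.sqrt (1 + a + b)
      = Real.sqrt ((x ^ 3 + a * x + b) * (1 + a + b)) := (Real.sqrt_mul hP.le _).symm
  rw [mul_assoc, hsq]
  have key : (x + a) * (x + 1) + 2 * b - 2 * (1 - x) ^ 2
      ≤ 2 * Real.sqrt ((x ^ 3 + a * x + b) * (1 + a + b)) := by
    rcases le_or_gt ((x + a) * (x + 1) + 2 * b - 2 * (1 - x) ^ 2) 0 with h | h
    · have : (0:ℝ) ≤ 2 * Real.sqrt ((x ^ 3 + a * x + b) * (1 + a + b)) := by positivity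
      linarith
    · have h2 : ((x + a) * (x + 1) + 2 * b - 2 * (1 - x) ^ 2) / 2
          ≤ Real.sqrt ((x ^ 3 + a * x + b) * (1 + a + b)) := by
        rw [Real.le_sqrt' (by linarith)]
        have hx6 : x < 6 := by nlinarith
        have hG : 0 < -(x ^ 2) / 4 + x * (3 + 3 * a / 2 + b) + (a + 3 * b - 1 - a ^ 2 / 4) := by
          nlinarith [sq_nonneg a, mul_pos (sub_pos.mpr hx) (sub_pos.mpr hx6)]
        nlinarith [mul_pos hden hG]
      linarith
  linarith
end

section
/- For x > 1 and real constants a, b with |a| ≤ 0.01 and |b| ≤ 0.01, the function g(x) = [(x+a)(x+1)+2b+2√(x³+ax+b)√(1+a+b)]/(1-x)² satisfies g(x) ≥ 1. -/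
theorem stmt_4 (a b : ℝ) (ha : |a| ≤ 0.01) (hb : |b| ≤ 0.01) :
    ∀ x : ℝ, 1 < x →
      1 ≤ ((x + a) * (x + 1) + 2 * b +
        2 * Real.sqrt (x ^ 3 + a * x + b) * Real.sqrt (1 + a + b)) / (1 - x) ^ 2 := by
  intro x hx
  have ha' := abs_le.mp ha
  have hb' := abs_le.mp hb
  have hs : 0 ≤ 2 * Real.sqrt (x ^ 3 + a * x + b) * Real.sqrt (1 + a + b) := by
    positivity
  have hpos : (0:ℝ) < (1 - x) ^ 2 := by nlinarith
  rw [le_div_iff₀ hpos]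
  nlinarith [sq_nonneg (x - 1)]
end

section
/- For x > 1 and real constants a, b with |a| ≤ 0.01 and |b| ≤ 0.01, the function g(x) = [(x+a)(x+1)+2b+2√(x³+ax+b)√(1+a+b)]/(1-x)² satisfies g(x) ≤ (2x+1)²/(x-1)². -/
set_option maxHeartbeats 1000000


theorem stmt_5 (a b : ℝ) (ha : |a| ≤ 0.01) (hb : |b| ≤ 0.01) :
    ∀ x : ℝ, 1 < x →
      ((x + a) * (x + 1) + 2 * b +
        2 * Real.sqrt (x ^ 3 + a * x + b) * Real.sqrt (1 + a + b)) / (1 - x) ^ 2 ≤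
        (2 * x + 1) ^ 2 / (x - 1) ^ 2 := by
  intro x hx
  obtain ⟨ha1, ha2⟩ := abs_le.mp ha
  obtain ⟨hb1, hb2⟩ := abs_le.mp hb
  have hx0 : (0:ℝ) < x := lt_trans one_pos hx
  have hP : (0:ℝ) ≤ x ^ 3 + a * x + b := by nlinarith [sq_nonneg x, sq_nonneg (x-1)]
  have hQ : (0:ℝ) ≤ 1 + a + b := by linarith
  set R : ℝ := ((2*x+1)^2 - ((x+a)*(x+1)+2*b)) / 2 with hRdef
  have hax : a * x ≤ 0.01 * x := by nlinarith
  have hax' : -(0.01 * x) ≤ a * x := by nlinarith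
  have hR' : (3*x^2+2.99*x+0.97)/2 ≤ R := by rw [hRdef]; nlinarith
  have hR : (0:ℝ) ≤ R := by nlinarith
  have key : Real.sqrt (x ^ 3 + a * x + b) * Real.sqrt (1 + a + b) ≤ R := by
    rw [← Real.sqrt_mul hP]
    have hPQ : (x ^ 3 + a * x + b) * (1 + a + b) ≤ 1.02 * (x^3 + 0.01*x + 0.01) := by
      have h1 : x ^ 3 + a * x + b ≤ x^3 + 0.01*x + 0.01 := by nlinarith
      have h2 : 1 + a + b ≤ 1.02 := by linarith
      calc (x ^ 3 + a * x + b) * (1 + a + b) ≤ (x^3 + 0.01*x + 0.01) * (1 + a + b) := by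
            apply mul_le_mul_of_nonneg_right h1 hQ
        _ ≤ (x^3 + 0.01*x + 0.01) * 1.02 := by
            apply mul_le_mul_of_nonneg_left h2; nlinarith
        _ = 1.02 * (x^3 + 0.01*x + 0.01) := by ring
    have hx2 : 1.02 * (x^3 + 0.01*x + 0.01) ≤ ((3*x^2+2.99*x+0.97)/2) ^ 2 := by
      nlinarith [sq_nonneg (x-1), sq_nonneg (x^2-x), sq_nonneg (x^2-1), pow_pos hx0 4, pow_pos hx0 3, sq_nonneg x]
    have h2 : (x ^ 3 + a * x + b) * (1 + a + b) ≤ R ^ 2 := by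
      have : ((3*x^2+2.99*x+0.97)/2) ^ 2 ≤ R ^ 2 := by
        apply pow_le_pow_left₀ (by nlinarith) hR' 2
      linarith
    calc Real.sqrt ((x ^ 3 + a * x + b) * (1 + a + b)) ≤ Real.sqrt (R ^ 2) :=
          Real.sqrt_le_sqrt h2
      _ = R := Real.sqrt_sq hR
  have hden : (1 - x) ^ 2 = (x - 1) ^ 2 := by ring
  rw [hden]
  have hpos : (0:ℝ) < (x - 1) ^ 2 := by
    have : x - 1 > 0 := by linarith
    positivity
  gcongr
  rw [hRdef] at key; linarith
end

section
/- Let P, Q be integral points on the quadratic twist E_D: y² = x³ + D²Ax + D³B with MD ≤ x(P) < x(Q) and y(P)y(Q) > 0, where M ≥ max{10√|A|, 5∛|B|}. Then 0.19·x(P) ≤ x(P+Q) ≤ 2·x(P). -/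
private lemma aux_L2 (u v a b : ℤ) (hu : 1 ≤ u) (hv : u + 1 ≤ v)
    (ha1 : -u^2 ≤ 100*a) (ha2 : 100*a ≤ u^2)
    (hb1 : -u^3 ≤ 125*b) (hb2 : 125*b ≤ u^3) :
    200*(119*u+100*v)*((u^3+a*u+b)+(v^3+a*v+b)) ≤
      10000*(u^2+u*v+v^2+a)^2 + (119*u+100*v)^2*(v-u)^2 := by
  nlinarith [sq_nonneg (v-u), sq_nonneg (u+v),
    mul_pos (by linarith : (0:ℤ)<u) (by linarith : (0:ℤ)<v),
    sq_nonneg (v*(v-u)), sq_nonneg (u*(v-u)), sq_nonneg (u*v - u^2),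
    mul_pos (mul_pos (by linarith : (0:ℤ)<u) (by linarith : (0:ℤ)<u)) (by linarith : (0:ℤ)<v)]

private lemma aux_R (u v a b : ℤ) (hu : 1 ≤ u) (hv : u + 1 ≤ v)
    (ha1 : -u^2 ≤ 100*a) (ha2 : 100*a ≤ u^2)
    (hb1 : -u^3 ≤ 125*b) (hb2 : 125*b ≤ u^3) :
    19*u*(v-u)^2 < 100*((u*v+a)*(u+v)+2*b) := by
  nlinarith [mul_pos (by linarith : (0:ℤ)<u) (by linarith : (0:ℤ)<v), sq_nonneg (v-u),
    mul_pos (mul_pos (by linarith : (0:ℤ)<u) (by linarith : (0:ℤ)<u)) (by linarith : (0:ℤ)<v),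
    mul_pos (mul_pos (by linarith : (0:ℤ)<u) (by linarith : (0:ℤ)<v)) (by linarith : (0:ℤ)<v)]

private lemma aux_U2 (u v a b : ℤ) (hu : 1 ≤ u) (hv : u + 1 ≤ v)
    (ha1 : -u^2 ≤ 100*a) (ha2 : 100*a ≤ u^2)
    (hb1 : -u^3 ≤ 125*b) (hb2 : 125*b ≤ u^3)
    (hS : 0 ≤ (u*v+a)*(u+v)+2*b-2*u*(v-u)^2) :
    (u^2+u*v+v^2+a)^2 + (3*u+v)^2*(v-u)^2 ≤
      2*(3*u+v)*((u^3+a*u+b)+(v^3+a*v+b)) := by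
  nlinarith [sq_nonneg (v-u), mul_pos (by linarith : (0:ℤ)<u) (by linarith : (0:ℤ)<v),
    mul_nonneg (mul_nonneg (by linarith : (0:ℤ)≤u) (by linarith : (0:ℤ)≤u)) (sq_nonneg (v-u)),
    mul_nonneg (by linarith : (0:ℤ)≤v) hS, mul_nonneg (by linarith : (0:ℤ)≤u) hS,
    mul_pos (mul_pos (by linarith : (0:ℤ)<u) (by linarith : (0:ℤ)<u)) (by linarith : (0:ℤ)<v)]


theorem stmt_11 (A B D M : ℤ) (hD : 0 < D) (hDsf : Squarefree D) (hM : 0 < M)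
    (hMA : 10 * Real.sqrt |(A : ℝ)| ≤ (M : ℝ))
    (hMB : 5 * |(B : ℝ)| ^ ((1 : ℝ) / 3) ≤ (M : ℝ))
    (xP yP xQ yQ : ℤ)
    (hP : yP ^ 2 = xP ^ 3 + D ^ 2 * A * xP + D ^ 3 * B)
    (hQ : yQ ^ 2 = xQ ^ 3 + D ^ 2 * A * xQ + D ^ 3 * B)
    (hlo : M * D ≤ xP) (hlt : xP < xQ) (hy : 0 < yP * yQ) :
    (0.19 : ℚ) * xP ≤
        (((xP : ℚ) * xQ + (D : ℚ) ^ 2 * A) * ((xP : ℚ) + xQ) + 2 * (D : ℚ) ^ 3 * B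
          - 2 * (yP : ℚ) * yQ) / ((xP : ℚ) - xQ) ^ 2 ∧
      (((xP : ℚ) * xQ + (D : ℚ) ^ 2 * A) * ((xP : ℚ) + xQ) + 2 * (D : ℚ) ^ 3 * B
          - 2 * (yP : ℚ) * yQ) / ((xP : ℚ) - xQ) ^ 2 ≤ 2 * xP := by
  have sqle : ∀ x y : ℤ, 0 < x → 0 < y → x^2 ≤ y^2 → x ≤ y := by
    intro x y hx hy h
    nlinarith
  have hMD : 0 < M * D := mul_pos hM hD
  have hu : 1 ≤ xP := le_trans hMD hlo
  have hMD0 : (0:ℤ) ≤ M * D := le_of_lt hMD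
  -- bound on |A|
  have hA : 100 * |A| ≤ M ^ 2 := by
    have h0 : Real.sqrt |(A:ℝ)| ≤ (M:ℝ) / 10 := by linarith
    have h1 : |(A:ℝ)| ≤ ((M:ℝ)/10) ^ 2 := by
      nlinarith [Real.sq_sqrt (abs_nonneg (A:ℝ)), Real.sqrt_nonneg |(A:ℝ)|]
    have h2 : (100:ℝ) * |(A:ℝ)| ≤ (M:ℝ) ^ 2 := by nlinarith
    exact_mod_cast (by push_cast; exact h2 : ((100 * |A| : ℤ) : ℝ) ≤ ((M^2 : ℤ) : ℝ))
  -- bound on |B|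
  have hB : 125 * |B| ≤ M ^ 3 := by
    have h0 : |(B:ℝ)| ^ ((1:ℝ)/3) ≤ (M:ℝ) / 5 := by linarith
    have hcube : (|(B:ℝ)| ^ ((1:ℝ)/3)) ^ (3:ℕ) = |(B:ℝ)| := by
      rw [← Real.rpow_natCast (|(B:ℝ)| ^ ((1:ℝ)/3)) 3, ← Real.rpow_mul (abs_nonneg _)]
      norm_num
    have h1 : |(B:ℝ)| ≤ ((M:ℝ)/5) ^ 3 := by
      calc |(B:ℝ)| = (|(B:ℝ)| ^ ((1:ℝ)/3)) ^ (3:ℕ) := hcube.symm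
        _ ≤ ((M:ℝ)/5) ^ (3:ℕ) :=
          pow_le_pow_left₀ (Real.rpow_nonneg (abs_nonneg _) _) h0 3
    have h2 : (125:ℝ) * |(B:ℝ)| ≤ (M:ℝ) ^ 3 := by nlinarith
    exact_mod_cast (by push_cast; exact h2 : ((125 * |B| : ℤ) : ℝ) ≤ ((M^3 : ℤ) : ℝ))
  -- bounds on a = D^2*A, b = D^3*B versus xP
  have hMD2 : (M*D)^2 ≤ xP^2 := pow_le_pow_left₀ hMD0 hlo 2
  have hMD3 : (M*D)^3 ≤ xP^3 := pow_le_pow_left₀ hMD0 hlo 3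
  have hD2 : (0:ℤ) ≤ D^2 := sq_nonneg D
  have hD3 : (0:ℤ) ≤ D^3 := by positivity
  have ha : 100 * (D^2 * |A|) ≤ xP^2 := by
    calc 100 * (D^2 * |A|) = D^2 * (100 * |A|) := by ring
      _ ≤ D^2 * M^2 := by exact mul_le_mul_of_nonneg_left hA hD2
      _ = (M*D)^2 := by ring
      _ ≤ xP^2 := hMD2
  have hb : 125 * (D^3 * |B|) ≤ xP^3 := by
    calc 125 * (D^3 * |B|) = D^3 * (125 * |B|) := by ring
      _ ≤ D^3 * M^3 := by exact mul_le_mul_of_nonneg_left hB hD3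
      _ = (M*D)^3 := by ring
      _ ≤ xP^3 := hMD3
  set a : ℤ := D^2*A with ha_def
  set b : ℤ := D^3*B with hb_def
  have habs : |a| = D^2 * |A| := by rw [ha_def, abs_mul, abs_of_nonneg hD2]
  have hbabs : |b| = D^3 * |B| := by rw [hb_def, abs_mul, abs_of_nonneg hD3]
  have ha1 : -xP^2 ≤ 100*a := by
    have := neg_abs_le a; rw [habs] at this; linarith
  have ha2 : 100*a ≤ xP^2 := by
    have := le_abs_self a; rw [habs] at this; linarith
  have hb1 : -xP^3 ≤ 125*b := by
    have := neg_abs_le b; rw [hbabs] at this; linarith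
  have hb2 : 125*b ≤ xP^3 := by
    have := le_abs_self b; rw [hbabs] at this; linarith
  have hv : xP + 1 ≤ xQ := hlt
  set u := xP
  set v := xQ
  set p : ℤ := yP * yQ with hp_def
  have hpp : p^2 = (u^3+a*u+b)*(v^3+a*v+b) := by
    have : p^2 = yP^2 * yQ^2 := by ring
    rw [this, hP, hQ]
  -- Lower bound key inequality (integer)
  have hL2 : 200*(119*u+100*v)*((u^3+a*u+b)+(v^3+a*v+b)) ≤
      10000*(u^2+u*v+v^2+a)^2 + (119*u+100*v)^2*(v-u)^2 :=
    aux_L2 u v a b hu hv ha1 ha2 hb1 hb2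
  have hR : 19*u*(v-u)^2 < 100*((u*v+a)*(u+v)+2*b) :=
    aux_R u v a b hu hv ha1 ha2 hb1 hb2
  have keyL : 19*u*(v-u)^2 + 200*p ≤ 100*((u*v+a)*(u+v)+2*b) := by
    set R : ℤ := 100*((u*v+a)*(u+v)+2*b) - 19*u*(v-u)^2 with hR_def
    have hRpos : 0 < R := by rw [hR_def]; linarith
    have hRsq : (200*p)^2 ≤ R^2 := by
      have hid : R^2 - (200*p)^2 =
          (v-u)^2 * (10000*(u^2+u*v+v^2+a)^2 + (119*u+100*v)^2*(v-u)^2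
            - 200*(119*u+100*v)*((u^3+a*u+b)+(v^3+a*v+b))) := by
        rw [hR_def]
        have : (200*p)^2 = 40000 * ((u^3+a*u+b)*(v^3+a*v+b)) := by
          rw [show (200*p)^2 = 40000 * p^2 by ring, hpp]
        rw [this]; ring
      have h2 : (0:ℤ) ≤ (v-u)^2 * (10000*(u^2+u*v+v^2+a)^2 + (119*u+100*v)^2*(v-u)^2
            - 200*(119*u+100*v)*((u^3+a*u+b)+(v^3+a*v+b))) :=
        mul_nonneg (sq_nonneg _) (by linarith)
      linarith
    have : 200*p ≤ R := sqle _ _ (by linarith) hRpos hRsq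
    rw [hR_def] at this; linarith
  -- Upper bound key inequality (integer)
  have keyU : (u*v+a)*(u+v)+2*b - 2*p ≤ 2*u*(v-u)^2 := by
    rcases le_or_gt ((u*v+a)*(u+v)+2*b - 2*u*(v-u)^2) 0 with hS | hS
    · linarith
    · set S : ℤ := (u*v+a)*(u+v)+2*b - 2*u*(v-u)^2 with hS_def
      have hU2 : (u^2+u*v+v^2+a)^2 + (3*u+v)^2*(v-u)^2 ≤
          2*(3*u+v)*((u^3+a*u+b)+(v^3+a*v+b)) :=
        aux_U2 u v a b hu hv ha1 ha2 hb1 hb2 (by linarith)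
      have hSsq : S^2 ≤ (2*p)^2 := by
        have hid : (2*p)^2 - S^2 =
            (v-u)^2 * (2*(3*u+v)*((u^3+a*u+b)+(v^3+a*v+b))
              - (u^2+u*v+v^2+a)^2 - (3*u+v)^2*(v-u)^2) := by
          rw [hS_def]
          have : (2*p)^2 = 4 * ((u^3+a*u+b)*(v^3+a*v+b)) := by
            rw [show (2*p)^2 = 4 * p^2 by ring, hpp]
          rw [this]; ring
        have h2 : (0:ℤ) ≤ (v-u)^2 * (2*(3*u+v)*((u^3+a*u+b)+(v^3+a*v+b))
              - (u^2+u*v+v^2+a)^2 - (3*u+v)^2*(v-u)^2) :=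
          mul_nonneg (sq_nonneg _) (by linarith)
        linarith
      have : S ≤ 2*p := sqle _ _ hS (by linarith) hSsq
      rw [hS_def] at this; linarith
  -- cast to ℚ and conclude
  have hq : (0:ℚ) < ((xP:ℚ) - xQ)^2 := by
    have h : ((xP:ℚ) - xQ) ≠ 0 := sub_ne_zero.mpr (by exact_mod_cast hlt.ne)
    calc (0:ℚ) < |(xP:ℚ) - xQ| ^ 2 := pow_pos (abs_pos.mpr h) 2
      _ = ((xP:ℚ) - xQ) ^ 2 := sq_abs _
  have keyLQ : 19*(u:ℚ)*((v:ℚ)-(u:ℚ))^2 + 200*((yP:ℚ)*(yQ:ℚ)) ≤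
      100*(((u:ℚ)*(v:ℚ)+(D:ℚ)^2*A)*((u:ℚ)+(v:ℚ))+2*((D:ℚ)^3*B)) := by
    have := keyL
    rw [hp_def, ha_def, hb_def] at this
    exact_mod_cast this
  have keyUQ : ((u:ℚ)*(v:ℚ)+(D:ℚ)^2*A)*((u:ℚ)+(v:ℚ))+2*((D:ℚ)^3*B) - 2*((yP:ℚ)*(yQ:ℚ))
      ≤ 2*(u:ℚ)*((v:ℚ)-(u:ℚ))^2 := by
    have := keyU
    rw [hp_def, ha_def, hb_def] at this
    exact_mod_cast this
  constructor
  · rw [le_div_iff₀ hq]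
    linarith [keyLQ]
  · rw [div_le_iff₀ hq]
    linarith [keyUQ]
end

section
/- Let P, Q be rational points on the quadratic twist E_D: y² = x³ + D²Ax + D³B with MD ≤ x(P) < x(Q) and y(P)y(Q) < 0, where M ≥ max{10√|A|, 5∛|B|}. Then x(P) ≤ x(P+Q) ≤ ((2μ+1)²/(μ-1)²)·x(P) for any 1 < μ ≤ x(Q)/x(P). -/
set_option maxHeartbeats 2000000 in
theorem stmt_12 (A B : ℤ) (D M : ℤ) (hD : 0 < D) (hDsf : Squarefree D) (hM : 0 < M)
    (hMA : 10 * Real.sqrt |(A : ℝ)| ≤ (M : ℝ))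
    (hMB : 5 * |(B : ℝ)| ^ ((1 : ℝ) / 3) ≤ (M : ℝ))
    (xP yP xQ yQ : ℚ)
    (hP : yP ^ 2 = xP ^ 3 + (D : ℚ) ^ 2 * A * xP + (D : ℚ) ^ 3 * B)
    (hQ : yQ ^ 2 = xQ ^ 3 + (D : ℚ) ^ 2 * A * xQ + (D : ℚ) ^ 3 * B)
    (hlo : (M : ℚ) * D ≤ xP) (hlt : xP < xQ) (hy : yP * yQ < 0)
    (μ : ℚ) (hμ1 : 1 < μ) (hμ2 : μ ≤ xQ / xP) :
    xP ≤
        ((xP * xQ + (D : ℚ) ^ 2 * A) * (xP + xQ) + 2 * (D : ℚ) ^ 3 * B - 2 * yP * yQ) /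
          (xP - xQ) ^ 2 ∧
      ((xP * xQ + (D : ℚ) ^ 2 * A) * (xP + xQ) + 2 * (D : ℚ) ^ 3 * B - 2 * yP * yQ) /
          (xP - xQ) ^ 2 ≤ (2 * μ + 1) ^ 2 / (μ - 1) ^ 2 * xP := by
  -- integer bounds from the real hypotheses
  have hA100 : (100 : ℤ) * |A| ≤ M ^ 2 := by
    have h0 : (0 : ℝ) ≤ Real.sqrt |(A : ℝ)| := Real.sqrt_nonneg _
    have h1 : Real.sqrt |(A : ℝ)| ^ 2 = |(A : ℝ)| := Real.sq_sqrt (abs_nonneg _)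
    have h2 : (100 : ℝ) * |(A : ℝ)| ≤ (M : ℝ) ^ 2 := by nlinarith [hMA]
    rw [← Int.cast_abs] at h2
    exact_mod_cast h2
  have hB125 : (125 : ℤ) * |B| ≤ M ^ 3 := by
    have h0 : (0 : ℝ) ≤ |(B : ℝ)| ^ ((1 : ℝ) / 3) := Real.rpow_nonneg (abs_nonneg _) _
    have h1 : (|(B : ℝ)| ^ ((1 : ℝ) / 3)) ^ (3 : ℕ) = |(B : ℝ)| := by
      rw [← Real.rpow_natCast (|(B : ℝ)| ^ ((1 : ℝ) / 3)) 3, ← Real.rpow_mul (abs_nonneg _)]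
      norm_num
    have h3 : (5 * |(B : ℝ)| ^ ((1 : ℝ) / 3)) ^ (3 : ℕ) ≤ (M : ℝ) ^ (3 : ℕ) :=
      pow_le_pow_left₀ (by positivity) hMB 3
    have h2 : (125 : ℝ) * |(B : ℝ)| ≤ (M : ℝ) ^ 3 := by
      calc (125 : ℝ) * |(B : ℝ)| = (5 * |(B : ℝ)| ^ ((1 : ℝ) / 3)) ^ (3 : ℕ) := by
            rw [mul_pow]; rw [h1]; norm_num
        _ ≤ (M : ℝ) ^ 3 := h3
    rw [← Int.cast_abs] at h2
    exact_mod_cast h2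
  -- rational setup
  set a : ℚ := (D : ℚ) ^ 2 * A with ha_def
  set b : ℚ := (D : ℚ) ^ 3 * B with hb_def
  have hDq : (0 : ℚ) < (D : ℚ) := by exact_mod_cast hD
  have hMq : (0 : ℚ) < (M : ℚ) := by exact_mod_cast hM
  have hp : 0 < xP := lt_of_lt_of_le (by positivity) hlo
  have hq : 0 < xQ := lt_trans hp hlt
  have hMD : (0 : ℚ) < (M : ℚ) * D := by positivity
  have hAq : (100 : ℚ) * |(A : ℚ)| ≤ (M : ℚ) ^ 2 := by exact_mod_cast hA100
  have hBq : (125 : ℚ) * |(B : ℚ)| ≤ (M : ℚ) ^ 3 := by exact_mod_cast hB125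
  have hMD2 : ((M : ℚ) * D) ^ 2 ≤ xP ^ 2 := by nlinarith
  have hMD3 : ((M : ℚ) * D) ^ 3 ≤ xP ^ 3 := by nlinarith
  -- |100 a| ≤ xP², |125 b| ≤ xP³
  have haU : 100 * a ≤ xP ^ 2 := by
    have h1 : (100 : ℚ) * ((D:ℚ)^2 * (A:ℚ)) ≤ (D:ℚ)^2 * (M:ℚ)^2 := by
      nlinarith [le_abs_self (A : ℚ), sq_nonneg (D : ℚ)]
    calc 100 * a ≤ (D:ℚ)^2 * (M:ℚ)^2 := h1
      _ = ((M:ℚ)*D)^2 := by ring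
      _ ≤ xP ^ 2 := hMD2
  have haL : -(xP ^ 2) ≤ 100 * a := by
    have h1 : -((D:ℚ)^2 * (M:ℚ)^2) ≤ (100 : ℚ) * ((D:ℚ)^2 * (A:ℚ)) := by
      nlinarith [neg_abs_le (A : ℚ), sq_nonneg (D : ℚ)]
    have h2 : -(xP^2) ≤ -(((M:ℚ)*D)^2) := by linarith
    calc -(xP^2) ≤ -(((M:ℚ)*D)^2) := h2
      _ = -((D:ℚ)^2 * (M:ℚ)^2) := by ring
      _ ≤ 100 * a := h1
  have hbU : 125 * b ≤ xP ^ 3 := by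
    have h0 : (125:ℚ) * (B:ℚ) ≤ (M:ℚ)^3 := by linarith [le_abs_self (B:ℚ), hBq]
    have h1 : (125 : ℚ) * ((D:ℚ)^3 * (B:ℚ)) ≤ (D:ℚ)^3 * (M:ℚ)^3 := by
      calc (125:ℚ) * ((D:ℚ)^3 * (B:ℚ)) = (D:ℚ)^3 * ((125:ℚ) * B) := by ring
        _ ≤ (D:ℚ)^3 * (M:ℚ)^3 := mul_le_mul_of_nonneg_left h0 (by positivity)
    calc 125 * b ≤ (D:ℚ)^3 * (M:ℚ)^3 := h1
      _ = ((M:ℚ)*D)^3 := by ring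
      _ ≤ xP ^ 3 := hMD3
  have hbL : -(xP ^ 3) ≤ 125 * b := by
    have h0 : -((M:ℚ)^3) ≤ (125:ℚ) * (B:ℚ) := by linarith [neg_abs_le (B:ℚ), hBq]
    have h1 : -((D:ℚ)^3 * (M:ℚ)^3) ≤ (125 : ℚ) * ((D:ℚ)^3 * (B:ℚ)) := by
      have := mul_le_mul_of_nonneg_left h0 (le_of_lt (pow_pos hDq 3))
      nlinarith [this]
    have h2 : -(xP^3) ≤ -(((M:ℚ)*D)^3) := by linarith
    calc -(xP^3) ≤ -(((M:ℚ)*D)^3) := h2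
      _ = -((D:ℚ)^3 * (M:ℚ)^3) := by ring
      _ ≤ 125 * b := h1
  -- z = -yP yQ
  set z : ℚ := -(yP * yQ) with hz_def
  have hz : 0 < z := neg_pos.mpr hy
  have hz2 : z ^ 2 = (xP ^ 3 + a * xP + b) * (xQ ^ 3 + a * xQ + b) := by
    have : z ^ 2 = yP ^ 2 * yQ ^ 2 := by ring
    rw [this, hP, hQ]
  -- bounds on f(xP), f(xQ)
  have hfP_lo : (491 : ℚ) / 500 * xP ^ 3 ≤ xP ^ 3 + a * xP + b := by
    nlinarith [mul_le_mul_of_nonneg_right haL (le_of_lt hp)]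
  have hfP_hi : xP ^ 3 + a * xP + b ≤ (509 : ℚ) / 500 * xP ^ 3 := by
    nlinarith [mul_le_mul_of_nonneg_right haU (le_of_lt hp)]
  have hfQ_lo : (491 : ℚ) / 500 * xQ ^ 3 ≤ xQ ^ 3 + a * xQ + b := by
    nlinarith [mul_le_mul_of_nonneg_right haL (le_of_lt hq), mul_pos hp hq,
      mul_pos (mul_pos hp hp) hq, sq_nonneg (xQ - xP), mul_pos hq hq,
      mul_pos (mul_pos hq hq) (sub_pos.mpr hlt)]
  have hfQ_hi : xQ ^ 3 + a * xQ + b ≤ (509 : ℚ) / 500 * xQ ^ 3 := by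
    nlinarith [mul_le_mul_of_nonneg_right haU (le_of_lt hq), mul_pos hp hq,
      mul_pos (mul_pos hq hq) (sub_pos.mpr hlt)]
  -- bounds on z
  have hz_lo : (491 : ℚ) / 500 * (xP ^ 2 * xQ) ≤ z := by
    have h1 : ((491 : ℚ) / 500 * (xP ^ 2 * xQ)) ^ 2 ≤ z ^ 2 := by
      rw [hz2]
      nlinarith [mul_le_mul hfP_lo hfQ_lo (by positivity) (by nlinarith [hfP_lo, pow_pos hp 3]),
        mul_pos (pow_pos hp 3) (mul_pos (pow_pos hq 2) (sub_pos.mpr hlt))]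
    nlinarith [h1, hz, mul_pos (mul_pos hp hp) hq]
  have hz_hi : z ≤ (509 : ℚ) / 500 * (xP * xQ ^ 2) := by
    have h1 : z ^ 2 ≤ ((509 : ℚ) / 500 * (xP * xQ ^ 2)) ^ 2 := by
      rw [hz2]
      nlinarith [mul_le_mul hfP_hi hfQ_hi (by nlinarith [hfQ_lo, pow_pos hq 3]) (by positivity),
        mul_pos (pow_pos hq 3) (mul_pos (mul_pos hp hq) (sub_pos.mpr hlt)),
        mul_pos (mul_pos hp hq) (sub_pos.mpr hlt)]
    nlinarith [h1, hz, mul_pos hp (mul_pos hq hq)]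
  have hpq2 : (0 : ℚ) < (xP - xQ) ^ 2 := by
    have : xP - xQ ≠ 0 := by intro h; nlinarith
    positivity
  have hμp : μ * xP ≤ xQ := (le_div_iff₀ hp).mp hμ2
  constructor
  · rw [le_div_iff₀ hpq2]
    have hN : (xP * xQ + a) * (xP + xQ) + 2 * (D:ℚ) ^ 3 * B - 2 * yP * yQ
        = (xP * xQ + a) * (xP + xQ) + 2 * b + 2 * z := by rw [hz_def, hb_def]; ring
    rw [hN]
    have hpq3 : xP ^ 2 * xP ≤ xP ^ 2 * xQ := mul_le_mul_of_nonneg_left hlt.le (sq_nonneg xP)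
    linarith [hz_lo, mul_le_mul_of_nonneg_right haL (le_of_lt hp),
      mul_le_mul_of_nonneg_right haL (le_of_lt hq), hbL, hpq3,
      mul_pos (mul_pos hp hp) hq]
  · have hμ1' : (0 : ℚ) < (μ - 1) ^ 2 := pow_pos (by linarith) 2
    rw [div_le_iff₀ hpq2, div_mul_eq_mul_div, div_mul_eq_mul_div, le_div_iff₀ hμ1']
    have hN : (xP * xQ + a) * (xP + xQ) + 2 * (D:ℚ) ^ 3 * B - 2 * yP * yQ
        = (xP * xQ + a) * (xP + xQ) + 2 * b + 2 * z := by rw [hz_def, hb_def]; ring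
    rw [hN]
    -- step 1: N ≤ xP * (2 xQ + xP)^2
    have step1 : (xP * xQ + a) * (xP + xQ) + 2 * b + 2 * z ≤ xP * (2 * xQ + xP) ^ 2 := by
      have hpq3 : xP ^ 2 * xP ≤ xP ^ 2 * xQ := mul_le_mul_of_nonneg_left hlt.le (sq_nonneg xP)
      have hpq4 : xP * (xP * xQ) ≤ xQ * (xP * xQ) :=
        mul_le_mul_of_nonneg_right hlt.le (by positivity)
      linarith [hz_hi, mul_le_mul_of_nonneg_right haU (le_of_lt hp),
        mul_le_mul_of_nonneg_right haU (le_of_lt hq), hbU, hpq3, hpq4,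
        mul_pos (mul_pos hp hp) hq, mul_pos hp (mul_pos hq hq), pow_pos hp 3]
    -- step 2: (2 xQ + xP)(μ-1) ≤ (2μ+1)(xQ - xP)
    have hkey : (2 * xQ + xP) * (μ - 1) ≤ (2 * μ + 1) * (xQ - xP) := by nlinarith [hμp]

    have hkey0 : (0 : ℚ) ≤ (2 * xQ + xP) * (μ - 1) := mul_nonneg (by linarith) (by linarith)
    have hsq : ((2 * xQ + xP) * (μ - 1)) ^ 2 ≤ ((2 * μ + 1) * (xQ - xP)) ^ 2 :=
      pow_le_pow_left₀ hkey0 hkey 2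
    have e1 := mul_le_mul_of_nonneg_right step1 (sq_nonneg (μ - 1))
    have e2 := mul_le_mul_of_nonneg_left hsq (le_of_lt hp)
    linarith [e1, e2]
end

section
/- Let P be a rational point on E_D: y² = x³ + D²Ax + D³B with x(P) ≥ MD, where M ≥ max{10√|A|, 5∛|B|}. Then 0.01·x(P) ≤ x(3P) ≤ 0.27·x(P). -/
set_option maxHeartbeats 1000000

theorem aux_pq (s t : ℚ) (hs1 : -(1/100) ≤ s) (hs2 : s ≤ 1/100)
    (ht1 : -(1/125) ≤ t) (ht2 : t ≤ 1/125) :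
    ((103/1000 : ℚ) ≤ 1 - 12*s - 96*t + 30*s^2 - 24*s*t + 36*s^3 + 48*t^2 + 48*s^2*t + 9*s^4 + 96*s*t^2 + 8*s^3*t + 64*t^3 ∧
     1 - 12*s - 96*t + 30*s^2 - 24*s*t + 36*s^3 + 48*t^2 + 48*s^2*t + 9*s^4 + 96*s*t^2 + 8*s^3*t + 64*t^3 ≤ (1897/1000 : ℚ)) ∧
    ((284/100 : ℚ) ≤ 3 + 6*s + 12*t - s^2 ∧ 3 + 6*s + 12*t - s^2 ≤ (316/100 : ℚ)) := by
  refine ⟨⟨?_, ?_⟩, ?_, ?_⟩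
  · nlinarith [sq_nonneg s, sq_nonneg t, mul_nonneg (mul_nonneg (sub_nonneg.2 hs2) (sub_nonneg.2 (by linarith : -(1/100) ≤ s))) (sub_nonneg.2 ht2), sq_nonneg (s*t), sq_nonneg (s+t), sq_nonneg (s-t), mul_nonneg (sub_nonneg.2 hs2) (sub_nonneg.2 ht2), mul_nonneg (sub_nonneg.2 hs2) (sub_nonneg.2 ht1), sq_nonneg (s*s), mul_nonneg (mul_nonneg (sub_nonneg.2 hs2) (sub_nonneg.2 hs2)) (sub_nonneg.2 ht2)]
  · nlinarith [sq_nonneg s, sq_nonneg t, sq_nonneg (s*t), sq_nonneg (s+t), sq_nonneg (s-t), sq_nonneg (s*s), mul_nonneg (mul_nonneg (sub_nonneg.2 hs2) (sub_nonneg.2 (by linarith : -(1/100) ≤ s))) (sub_nonneg.2 ht2), mul_nonneg (sub_nonneg.2 hs2) (sub_nonneg.2 ht2), mul_nonneg (sub_nonneg.2 hs2) (sub_nonneg.2 ht1), mul_nonneg (mul_nonneg (sub_nonneg.2 hs2) (sub_nonneg.2 hs2)) (sub_nonneg.2 ht2), mul_nonneg (sub_nonneg.2 (by linarith : -(1/100)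 ≤ s)) (sub_nonneg.2 (by linarith : -(1/125) ≤ t))]
  · nlinarith [sq_nonneg s]
  · nlinarith [sq_nonneg s]

theorem stmt_13 (A B : ℤ) (D M : ℤ) (hD : 0 < D) (hDsf : Squarefree D) (hM : 0 < M)
    (hMA : 10 * Real.sqrt |(A : ℝ)| ≤ (M : ℝ))
    (hMB : 5 * |(B : ℝ)| ^ ((1 : ℝ) / 3) ≤ (M : ℝ))
    (xP yP : ℚ)
    (hP : yP ^ 2 = xP ^ 3 + (D : ℚ) ^ 2 * A * xP + (D : ℚ) ^ 3 * B)
    (hlo : (M : ℚ) * D ≤ xP) :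
    (0.01 : ℚ) * xP ≤
        (xP ^ 9 - 12 * (D : ℚ) ^ 2 * A * xP ^ 7 - 96 * (D : ℚ) ^ 3 * B * xP ^ 6
            + 30 * (D : ℚ) ^ 4 * A ^ 2 * xP ^ 5 - 24 * (D : ℚ) ^ 5 * A * B * xP ^ 4
            + (D : ℚ) ^ 6 * (36 * A ^ 3 + 48 * B ^ 2) * xP ^ 3
            + 48 * (D : ℚ) ^ 7 * A ^ 2 * B * xP ^ 2
            + (D : ℚ) ^ 8 * (9 * A ^ 4 + 96 * A * B ^ 2) * xP
            + (D : ℚ) ^ 9 * (8 * A ^ 3 * B + 64 * B ^ 3)) /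
          (3 * xP ^ 4 + 6 * (D : ℚ) ^ 2 * A * xP ^ 2 + 12 * (D : ℚ) ^ 3 * B * xP
            - (D : ℚ) ^ 4 * A ^ 2) ^ 2 ∧
      (xP ^ 9 - 12 * (D : ℚ) ^ 2 * A * xP ^ 7 - 96 * (D : ℚ) ^ 3 * B * xP ^ 6
            + 30 * (D : ℚ) ^ 4 * A ^ 2 * xP ^ 5 - 24 * (D : ℚ) ^ 5 * A * B * xP ^ 4
            + (D : ℚ) ^ 6 * (36 * A ^ 3 + 48 * B ^ 2) * xP ^ 3
            + 48 * (D : ℚ) ^ 7 * A ^ 2 * B * xP ^ 2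
            + (D : ℚ) ^ 8 * (9 * A ^ 4 + 96 * A * B ^ 2) * xP
            + (D : ℚ) ^ 9 * (8 * A ^ 3 * B + 64 * B ^ 3)) /
          (3 * xP ^ 4 + 6 * (D : ℚ) ^ 2 * A * xP ^ 2 + 12 * (D : ℚ) ^ 3 * B * xP
            - (D : ℚ) ^ 4 * A ^ 2) ^ 2 ≤ (0.27 : ℚ) * xP := by
  -- integer bounds on |A|, |B|
  have hAZ : (100 : ℤ) * |A| ≤ M ^ 2 := by
    have h1 : (0:ℝ) ≤ Real.sqrt |(A:ℝ)| := Real.sqrt_nonneg _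
    have h2 : Real.sqrt |(A:ℝ)| ^ 2 = |(A:ℝ)| := Real.sq_sqrt (abs_nonneg _)
    have h3 : (100:ℝ) * |(A:ℝ)| ≤ (M:ℝ)^2 := by nlinarith
    have h4 : (100:ℝ) * ((|A| : ℤ) : ℝ) ≤ ((M^2 : ℤ) : ℝ) := by push_cast; exact h3
    exact_mod_cast h4
  have hBZ : (125 : ℤ) * |B| ≤ M ^ 3 := by
    have h1 : (0:ℝ) ≤ |(B:ℝ)| ^ ((1:ℝ)/3) := Real.rpow_nonneg (abs_nonneg _) _
    have h2 : (|(B:ℝ)| ^ ((1:ℝ)/3)) ^ (3:ℕ) = |(B:ℝ)| := by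
      rw [← Real.rpow_natCast (|(B:ℝ)| ^ ((1:ℝ)/3)) 3, ← Real.rpow_mul (abs_nonneg _)]
      norm_num
    have h5 : (5 * (|(B:ℝ)| ^ ((1:ℝ)/3))) ^ (3:ℕ) ≤ (M:ℝ)^(3:ℕ) :=
      pow_le_pow_left₀ (by positivity) hMB 3
    have h3 : (125:ℝ) * |(B:ℝ)| ≤ (M:ℝ)^3 := by nlinarith
    have h4 : (125:ℝ) * ((|B| : ℤ) : ℝ) ≤ ((M^3 : ℤ) : ℝ) := by push_cast; exact h3
    exact_mod_cast h4
  have hAQ : (100 : ℚ) * |(A:ℚ)| ≤ (M:ℚ) ^ 2 := by exact_mod_cast hAZ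
  have hBQ : (125 : ℚ) * |(B:ℚ)| ≤ (M:ℚ) ^ 3 := by exact_mod_cast hBZ
  have hDQ : (0:ℚ) < (D:ℚ) := by exact_mod_cast hD
  have hMQ : (0:ℚ) < (M:ℚ) := by exact_mod_cast hM
  have hMD : (0:ℚ) < (M:ℚ) * D := mul_pos hMQ hDQ
  have hx : (0:ℚ) < xP := lt_of_lt_of_le hMD hlo
  -- bounds on scaled variables
  set s : ℚ := (D:ℚ)^2 * A / xP^2 with hsdef
  set t : ℚ := (D:ℚ)^3 * B / xP^3 with htdef
  have hx2 : (0:ℚ) < xP^2 := by positivity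
  have hx3 : (0:ℚ) < xP^3 := by positivity
  have hMD2 : ((M:ℚ)*D)^2 ≤ xP^2 := pow_le_pow_left₀ hMD.le hlo 2
  have hMD3 : ((M:ℚ)*D)^3 ≤ xP^3 := pow_le_pow_left₀ hMD.le hlo 3
  have habs1 : (100:ℚ) * |(D:ℚ)^2 * A| ≤ xP^2 := by
    rw [abs_mul, abs_pow, abs_of_pos hDQ]
    nlinarith [mul_le_mul_of_nonneg_left hAQ (sq_nonneg (D:ℚ))]
  have habs2 : (125:ℚ) * |(D:ℚ)^3 * B| ≤ xP^3 := by
    rw [abs_mul, abs_pow, abs_of_pos hDQ]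
    nlinarith [mul_le_mul_of_nonneg_left hBQ (pow_nonneg hDQ.le 3)]
  have hs2 : s ≤ 1/100 := by
    rw [hsdef, div_le_iff₀ hx2]
    linarith [le_abs_self ((D:ℚ)^2 * A)]
  have hs1 : -(1/100) ≤ s := by
    rw [hsdef, le_div_iff₀ hx2]
    linarith [neg_abs_le ((D:ℚ)^2 * A)]
  have ht2 : t ≤ 1/125 := by
    rw [htdef, div_le_iff₀ hx3]
    linarith [le_abs_self ((D:ℚ)^3 * B)]
  have ht1 : -(1/125) ≤ t := by
    rw [htdef, le_div_iff₀ hx3]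
    linarith [neg_abs_le ((D:ℚ)^3 * B)]
  have ht2' : t ≤ 1/100 := by linarith
  obtain ⟨⟨hp1, hp2⟩, hq1, hq2⟩ := aux_pq s t hs1 hs2 ht1 ht2
  set p : ℚ := 1 - 12*s - 96*t + 30*s^2 - 24*s*t + 36*s^3 + 48*t^2 + 48*s^2*t + 9*s^4 + 96*s*t^2 + 8*s^3*t + 64*t^3 with hpdef
  set q : ℚ := 3 + 6*s + 12*t - s^2 with hqdef
  have hxne : xP ≠ 0 := hx.ne'
  have hN : (xP ^ 9 - 12 * (D : ℚ) ^ 2 * A * xP ^ 7 - 96 * (D : ℚ) ^ 3 * B * xP ^ 6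
            + 30 * (D : ℚ) ^ 4 * A ^ 2 * xP ^ 5 - 24 * (D : ℚ) ^ 5 * A * B * xP ^ 4
            + (D : ℚ) ^ 6 * (36 * A ^ 3 + 48 * B ^ 2) * xP ^ 3
            + 48 * (D : ℚ) ^ 7 * A ^ 2 * B * xP ^ 2
            + (D : ℚ) ^ 8 * (9 * A ^ 4 + 96 * A * B ^ 2) * xP
            + (D : ℚ) ^ 9 * (8 * A ^ 3 * B + 64 * B ^ 3)) = xP^9 * p := by
    rw [hpdef, hsdef, htdef]; field_simp; ring
  have hPsi : (3 * xP ^ 4 + 6 * (D : ℚ) ^ 2 * A * xP ^ 2 + 12 * (D : ℚ) ^ 3 * B * xP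
            - (D : ℚ) ^ 4 * A ^ 2) = xP^4 * q := by
    rw [hqdef, hsdef, htdef]; field_simp
  clear_value p q s t
  clear hsdef htdef hpdef hqdef
  rw [hN, hPsi]
  have hqpos : (0:ℚ) < q := by linarith
  have hden : (0:ℚ) < (xP^4 * q)^2 := by positivity
  have hq2sq : q^2 ≤ (316/100)^2 := by nlinarith
  have hq1sq : ((284/100 : ℚ))^2 ≤ q^2 := by nlinarith
  have hx9 : (0:ℚ) < xP^9 := by positivity
  constructor
  · rw [le_div_iff₀ hden]
    have key : (0.01 : ℚ) * q^2 ≤ p := by norm_num; nlinarith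
    calc (0.01:ℚ) * xP * (xP^4*q)^2 = xP^9 * ((0.01:ℚ) * q^2) := by ring
      _ ≤ xP^9 * p := by nlinarith
  · rw [div_le_iff₀ hden]
    have key : p ≤ (0.27 : ℚ) * q^2 := by norm_num; nlinarith
    calc xP^9 * p ≤ xP^9 * ((0.27:ℚ) * q^2) := by nlinarith
      _ = (0.27:ℚ) * xP * (xP^4*q)^2 := by ring
end

section
/- Let n ≥ 2 be a real number and P₁, P₂ nonzero vectors in a real inner product space with squared norms ĥ(P₁), ĥ(P₂) ∈ [(n-0.5)L, (n+0.5)L] for some L > 0, and suppose ĥ(P₁-P₂) ≥ (n-1.6)L. Then cos θ_{P₁,P₂} = (ĥ(P₁)+ĥ(P₂)-ĥ(P₁-P₂))/(2√(ĥ(P₁)ĥ(P₂))) ≤ max{(n+1.6)/(2√(n²-0.25)), 1 - (n-1.6)/(2(n+0.5))}. -/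
private lemma quad_corner (p q t M d : ℝ) (hpq : p < q) (ht : p ≤ t) (ht' : t ≤ q)
    (hA : p ^ 2 - 2 * M * p + d ≤ 0) (hB : q ^ 2 - 2 * M * q + d ≤ 0) :
    t ^ 2 - 2 * M * t + d ≤ 0 := by
  nlinarith [mul_nonneg (sub_nonneg.2 ht) (sub_nonneg.2 ht'),
    mul_nonneg (sub_nonneg.2 ht') (neg_nonneg.2 hA),
    mul_nonneg (sub_nonneg.2 ht) (neg_nonneg.2 hB)]

private lemma key (p q t s c M : ℝ) (hpq : p < q)
    (ht : p ≤ t) (ht' : t ≤ q) (hs : p ≤ s) (hs' : s ≤ q)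
    (hc1 : 2 * p ^ 2 - c ≤ 2 * M * p ^ 2)
    (hc2 : p ^ 2 + q ^ 2 - c ≤ 2 * M * p * q)
    (hc3 : 2 * q ^ 2 - c ≤ 2 * M * q ^ 2) :
    t ^ 2 + s ^ 2 - c ≤ 2 * M * t * s := by
  have hA : t ^ 2 - 2 * (M * p) * t + (p ^ 2 - c) ≤ 0 :=
    quad_corner p q t (M * p) (p ^ 2 - c) hpq ht ht' (by nlinarith) (by nlinarith)
  have hB : t ^ 2 - 2 * (M * q) * t + (q ^ 2 - c) ≤ 0 :=
    quad_corner p q t (M * q) (q ^ 2 - c) hpq ht ht' (by nlinarith) (by nlinarith)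
  have := quad_corner p q s (M * t) (t ^ 2 - c) hpq hs hs' (by nlinarith) (by nlinarith)
  nlinarith

set_option maxHeartbeats 1000000 in
private lemma main_ineq (n L t s d R M : ℝ) (hn : 2 ≤ n) (hL : 0 < L)
    (ht0 : 0 < t) (hs0 : 0 < s)
    (h1 : (n - 0.5) * L ≤ t ^ 2) (h1' : t ^ 2 ≤ (n + 0.5) * L)
    (h2 : (n - 0.5) * L ≤ s ^ 2) (h2' : s ^ 2 ≤ (n + 0.5) * L)
    (hd : (n - 1.6) * L ≤ d)
    (hR2 : R ^ 2 = n ^ 2 - 0.25) (hR0 : 0 < R)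
    (hM1 : (n + 1.6) / (2 * R) ≤ M)
    (hM2 : 1 - (n - 1.6) / (2 * (n + 0.5)) ≤ M) :
    t ^ 2 + s ^ 2 - d ≤ M * (2 * (t * s)) := by
  have hnl0 : (0:ℝ) ≤ (n - 0.5) * L := by nlinarith
  set p := Real.sqrt ((n - 0.5) * L) with hpdef
  set q := Real.sqrt ((n + 0.5) * L) with hqdef
  have hp2 : p ^ 2 = (n - 0.5) * L := Real.sq_sqrt hnl0
  have hq2 : q ^ 2 = (n + 0.5) * L := Real.sq_sqrt (by nlinarith)
  have hpq : p < q := Real.sqrt_lt_sqrt hnl0 (by nlinarith)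
  have hpqR : p * q = R * L := by
    rw [hpdef, hqdef, ← Real.sqrt_mul hnl0,
      show (n - 0.5) * L * ((n + 0.5) * L) = (n ^ 2 - 0.25) * L ^ 2 by ring, ← hR2,
      Real.sqrt_mul (by positivity), Real.sqrt_sq hL.le, Real.sqrt_sq hR0.le]
  have hM1' : (n + 1.6) ≤ M * (2 * R) := by
    have he : (n + 1.6) / (2 * R) * (2 * R) = n + 1.6 := by field_simp
    have hh := mul_le_mul_of_nonneg_right hM1 (by positivity : (0:ℝ) ≤ 2 * R)
    rw [he] at hh; linarith
  have hM2' : (n + 2.6) ≤ M * (2 * (n + 0.5)) := by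
    have hd0 : (0:ℝ) < 2 * (n + 0.5) := by linarith
    have he : (1 - (n - 1.6) / (2 * (n + 0.5))) * (2 * (n + 0.5)) = n + 2.6 := by
      field_simp; ring
    have hh := mul_le_mul_of_nonneg_right hM2 hd0.le
    rw [he] at hh; linarith
  have hM3' : (n + 0.6) ≤ M * (2 * (n - 0.5)) := by
    have hh := mul_le_mul_of_nonneg_right hM2' (by linarith : (0:ℝ) ≤ 2 * (n - 0.5))
    nlinarith
  have ht : p ≤ t := by
    have := Real.sqrt_le_sqrt h1
    rwa [Real.sqrt_sq ht0.le] at this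
  have ht' : t ≤ q := by
    have := Real.sqrt_le_sqrt h1'
    rwa [Real.sqrt_sq ht0.le] at this
  have hs : p ≤ s := by
    have := Real.sqrt_le_sqrt h2
    rwa [Real.sqrt_sq hs0.le] at this
  have hs' : s ≤ q := by
    have := Real.sqrt_le_sqrt h2'
    rwa [Real.sqrt_sq hs0.le] at this
  have hkey : t ^ 2 + s ^ 2 - (n - 1.6) * L ≤ 2 * M * t * s := by
    apply key p q t s ((n - 1.6) * L) M hpq ht ht' hs hs'
    · rw [hp2]
      nlinarith [mul_le_mul_of_nonneg_right hM3' hL.le]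
    · rw [hp2, hq2, mul_assoc, hpqR]
      nlinarith [mul_le_mul_of_nonneg_right hM1' hL.le]
    · rw [hq2]
      nlinarith [mul_le_mul_of_nonneg_right hM2' hL.le]
  nlinarith

set_option maxHeartbeats 1000000 in
theorem stmt_16 {V : Type*} [NormedAddCommGroup V] [InnerProductSpace ℝ V]
    (n : ℝ) (hn : 2 ≤ n) (P₁ P₂ : V) (hP₁ : P₁ ≠ 0) (hP₂ : P₂ ≠ 0)
    (L : ℝ) (hL : 0 < L)
    (h1 : (n - 0.5) * L ≤ ‖P₁‖ ^ 2) (h1' : ‖P₁‖ ^ 2 ≤ (n + 0.5) * L)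
    (h2 : (n - 0.5) * L ≤ ‖P₂‖ ^ 2) (h2' : ‖P₂‖ ^ 2 ≤ (n + 0.5) * L)
    (h3 : (n - 1.6) * L ≤ ‖P₁ - P₂‖ ^ 2) :
    (‖P₁‖ ^ 2 + ‖P₂‖ ^ 2 - ‖P₁ - P₂‖ ^ 2) /
        (2 * Real.sqrt (‖P₁‖ ^ 2 * ‖P₂‖ ^ 2)) ≤
      max ((n + 1.6) / (2 * Real.sqrt (n ^ 2 - 0.25)))
        (1 - (n - 1.6) / (2 * (n + 0.5))) := by
  have ht0 : (0:ℝ) < ‖P₁‖ := norm_pos_iff.2 hP₁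
  have hs0 : (0:ℝ) < ‖P₂‖ := norm_pos_iff.2 hP₂
  have hR2 : Real.sqrt (n ^ 2 - 0.25) ^ 2 = n ^ 2 - 0.25 :=
    Real.sq_sqrt (by nlinarith)
  have hR0 : 0 < Real.sqrt (n ^ 2 - 0.25) := Real.sqrt_pos.2 (by nlinarith)
  have hts : Real.sqrt (‖P₁‖ ^ 2 * ‖P₂‖ ^ 2) = ‖P₁‖ * ‖P₂‖ := by
    rw [show ‖P₁‖ ^ 2 * ‖P₂‖ ^ 2 = (‖P₁‖ * ‖P₂‖) ^ 2 by ring,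
      Real.sqrt_sq (by positivity)]
  rw [hts, div_le_iff₀ (by positivity)]
  exact main_ineq n L ‖P₁‖ ‖P₂‖ (‖P₁ - P₂‖ ^ 2) (Real.sqrt (n ^ 2 - 0.25)) _
    hn hL ht0 hs0 h1 h1' h2 h2' h3 hR2 hR0 (le_max_left _ _) (le_max_right _ _)
end
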